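/- The Λ-algebra homomorphism Φ : P_ρ → T determined on generators by z₀₀ ↦ z₀₀, z₀₁ ↦ z₀₁, z₁₀ ↦ z₁₀, z₁₁ ↦ z₁₁, c₁ ↦ z₁₀z₁₁x₁, d₁ ↦ z₀₀z₀₁x₁, c₂ ↦ z₀₁z₁₁x₂, d₂ ↦ z₀₀z₁₀x₂, c₁₂ ↦ z₀₁z₁₀(x₁ + x₂), d₁₂ ↦ z₀₀z₁₁(x₁ + x₂) is well defined (it sends each of the eight defining relations of P_ρ to zero) and is an isomorphism of Λ-algebras. -/

import Mathlib

/-!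
In `P_ρ` the `z_{ij}` are units, their product being `ι²`. So `Ψ : T → P_ρ` with
`x₁ ↦ ι⁻² z₁₀ z₁₁ d₁ = d₁ / (z₀₀ z₀₁)` and `x₂ ↦ ι⁻² z₀₁ z₁₁ d₂ = d₂ / (z₀₀ z₁₀)` is well defined,
and the relations of `P_ρ` that are linear in the `c`'s and `d`'s recover `c₁, c₂, c₁₂, d₁₂`
from `d₁, d₂`; this makes `Ψ` inverse to `Φ` on generators.
-/

noncomputable section

open MvPolynomial

namespace BT2Rho

/-- `Λ = ℤ[ι, ι⁻¹]`, Laurent polynomials in the variable `ι`. -/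
abbrev Lam : Type := LaurentPolynomial ℤ

/-- `ι ∈ Λ`. -/
def iota : Lam := LaurentPolynomial.T 1

/-- The defining ideal of `P_ρ`, the base change along `ρ : ℍ → ℤ[ι^{±1}]` of the
presentation of the equivariant cohomology of `BT²`.  The ten variables
`X 0, …, X 9` correspond to
`ζ₀₀, ζ₀₁, ζ₁₀, ζ₁₁, c_{ω₁}, c_{χω₁}, c_{ω₂}, c_{χω₂}, c_{ω₁⊗ω₂}, c_{χω₁⊗ω₂}`,
i.e. to `z₀₀, z₀₁, z₁₀, z₁₁, c₁, d₁, c₂, d₂, c₁₂, d₁₂`. -/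
def Irho : Ideal (MvPolynomial (Fin 10) Lam) :=
  Ideal.span
    { X 0 * X 1 * X 2 * X 3 - C (LaurentPolynomial.T 2),
      X 2 * X 3 * X 5 - X 0 * X 1 * X 4,
      X 1 * X 3 * X 7 - X 0 * X 2 * X 6,
      X 0 * X 8 - X 2 * X 5 - X 1 * X 7,
      X 3 * X 8 - X 1 * X 4 - X 2 * X 6,
      X 1 * X 9 - X 3 * X 5 - X 0 * X 6,
      X 2 * X 9 - X 0 * X 4 - X 3 * X 7,
      X 8 * X 9 - X 4 * X 5 - X 6 * X 7
        - C (2 * LaurentPolynomial.T (-2)) * (X 0 ^ 2 * X 1 * X 2 * X 4 * X 6) }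

/-- `P_ρ`. -/
abbrev Prho : Type := MvPolynomial (Fin 10) Lam ⧸ Irho

/-- Quotient map onto `P_ρ`. -/
def mkP : MvPolynomial (Fin 10) Lam →+* Prho := Ideal.Quotient.mk Irho

/-- The ring `ℤ[ι^{±1}, z₀₀^{±1}, z₀₁^{±1}, z₁₀^{±1}, z₁₁^{±1}]` of Laurent
polynomials in five variables: index `0` is `ι`, indices `1, 2, 3, 4` are
`z₀₀, z₀₁, z₁₀, z₁₁`. -/
abbrev Base : Type := AddMonoidAlgebra ℤ (Fin 5 →₀ ℤ)

/-- The invertible generators of `Base`. -/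
def uu (i : Fin 5) : Base := AddMonoidAlgebra.single (Finsupp.single i 1) 1

/-- The defining ideal of `T`, generated by `z₀₀z₀₁z₁₀z₁₁ − ι²`. -/
def IT : Ideal (MvPolynomial (Fin 2) Base) :=
  Ideal.span { (C (uu 1 * uu 2 * uu 3 * uu 4 - uu 0 ^ 2) : MvPolynomial (Fin 2) Base) }

/-- `T = ℤ[ι^{±1}, z₀₀^{±1}, z₀₁^{±1}, z₁₀^{±1}, z₁₁^{±1}][x₁, x₂] / (z₀₀z₀₁z₁₀z₁₁ − ι²)`,
the nonequivariant integral cohomology of `BT²` regraded on `RO(ΠBT²)`.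
The polynomial variables `X 0, X 1` are `x₁, x₂`. -/
abbrev Tring : Type := MvPolynomial (Fin 2) Base ⧸ IT

/-- Quotient map onto `T`. -/
def mkT : MvPolynomial (Fin 2) Base →+* Tring := Ideal.Quotient.mk IT

end BT2Rho

section GroupAlgebra

open AddMonoidAlgebra LaurentPolynomial

variable {σ R : Type*}

theorem MonoidHom.ext_mfinsupp [Monoid R] {f g : Multiplicative (σ →₀ ℤ) →* R}
    (h : ∀ i, f (.ofAdd (Finsupp.single i 1)) = g (.ofAdd (Finsupp.single i 1))) : f = g :=
  MonoidHom.toAdditiveRight.injective <|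
    Finsupp.addHom_ext' fun i => AddMonoidHom.ext_int <| Additive.toMul.injective (h i)

theorem LaurentPolynomial.ringHom_ext_int [Semiring R] {f g : ℤ[T;T⁻¹] →+* R}
    (h : f (T 1) = g (T 1)) : f = g :=
  AddMonoidAlgebra.ringHom_ext' (RingHom.ext_int _ _) (MonoidHom.ext_mint h)

theorem AddMonoidAlgebra.ringHom_ext_int_finsupp [Semiring R]
    {f g : AddMonoidAlgebra ℤ (σ →₀ ℤ) →+* R}
    (h : ∀ i, f (single (Finsupp.single i 1) 1) = g (single (Finsupp.single i 1) 1)) : f = g :=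
  AddMonoidAlgebra.ringHom_ext' (RingHom.ext_int _ _) (MonoidHom.ext_mfinsupp h)

theorem AddMonoidAlgebra.isUnit_single_one {G : Type*} [AddGroup G] [Semiring R] (a : G) :
    IsUnit (single a (1 : R)) :=
  (Group.isUnit (Multiplicative.ofAdd a)).map (of R G)

def AddMonoidAlgebra.evalUnits [CommRing R] (u : σ → Rˣ) : AddMonoidAlgebra ℤ (σ →₀ ℤ) →+* R :=
  (lift ℤ R (σ →₀ ℤ) ((Units.coeHom R).comp (MonoidHom.toAdditiveRight.symm
    (Finsupp.liftAddHom fun i => zmultiplesHom _ (Additive.ofMul (u i)))))).toRingHom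

@[simp]
theorem AddMonoidAlgebra.evalUnits_single [CommRing R] (u : σ → Rˣ) (i : σ) :
    evalUnits u (single (Finsupp.single i 1) 1) = u i := by
  simp [evalUnits]

end GroupAlgebra

theorem isUnit_of_isUnit_mul₄ {M : Type*} [CommMonoid M] {a b c d : M}
    (h : IsUnit (a * b * c * d)) : IsUnit a ∧ IsUnit b ∧ IsUnit c ∧ IsUnit d := by
  simpa only [IsUnit.mul_iff, and_assoc] using h

namespace BT2Rho

open LaurentPolynomial (T)

theorem isUnit_mkT_C_uu (i : Fin 5) : IsUnit (mkT (C (uu i))) :=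
  (AddMonoidAlgebra.isUnit_single_one _).map (mkT.comp C)

theorem mkT_zeta_prod :
    mkT (C (uu 1)) * mkT (C (uu 2)) * mkT (C (uu 3)) * mkT (C (uu 4)) = mkT (C (uu 0)) ^ 2 := by
  have h : mkT (C (uu 1 * uu 2 * uu 3 * uu 4 - uu 0 ^ 2)) = 0 :=
    Ideal.Quotient.eq_zero_iff_mem.2 (Ideal.subset_span rfl)
  simpa only [map_sub, map_mul, map_pow, sub_eq_zero] using h

def phiGen : Fin 10 → Tring :=
  ![mkT (C (uu 1)), mkT (C (uu 2)), mkT (C (uu 3)), mkT (C (uu 4)),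
    mkT (C (uu 3) * C (uu 4) * X 0), mkT (C (uu 1) * C (uu 2) * X 0),
    mkT (C (uu 2) * C (uu 4) * X 1), mkT (C (uu 1) * C (uu 3) * X 1),
    mkT (C (uu 2) * C (uu 3) * (X 0 + X 1)), mkT (C (uu 1) * C (uu 4) * (X 0 + X 1))]

def phiPoly : MvPolynomial (Fin 10) Lam →+* Tring :=
  eval₂Hom (LaurentPolynomial.eval₂ (Int.castRingHom Tring) (isUnit_mkT_C_uu 0).unit) phiGen

theorem phiPoly_C_T (n : ℤ) :
    phiPoly (C (T n)) = ((isUnit_mkT_C_uu 0).unit ^ n : Tringˣ) := by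
  simp [phiPoly]

theorem phiPoly_X (i : Fin 10) : phiPoly (X i) = phiGen i :=
  eval₂Hom_X' ..

theorem Irho_le_ker_phiPoly : Irho ≤ RingHom.ker phiPoly := by
  set ι := mkT (C (uu 0))
  set w : Tring := ↑(isUnit_mkT_C_uu 0).unit⁻¹
  have hw : w ^ 2 * ι ^ 2 = 1 := by
    linear_combination (w * ι + 1) * (isUnit_mkT_C_uu 0).val_inv_mul
  have hT2 : phiPoly (C (T 2)) = ι ^ 2 := by
    rw [phiPoly_C_T, zpow_ofNat, Units.val_pow_eq_pow_val, IsUnit.unit_spec]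
  have hTm2 : phiPoly (C (T (-2))) = w ^ 2 := by
    rw [phiPoly_C_T, zpow_neg, zpow_ofNat, ← inv_pow, Units.val_pow_eq_pow_val]
  have hz := mkT_zeta_prod
  rw [Irho, Ideal.span_le]
  rintro p (rfl | rfl | rfl | rfl | rfl | rfl | rfl | rfl) <;>
    simp only [SetLike.mem_coe, RingHom.mem_ker, map_sub, map_mul, map_add, map_pow, map_ofNat,
      phiPoly_X, hT2, hTm2, phiGen, Matrix.cons_val]
  · linear_combination hz
  -- these six hold before imposing `z₀₀z₀₁z₁₀z₁₁ = ι²`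
  iterate 6 ring
  · linear_combination 2 * mkT (X 0) * mkT (X 1) *
      ((1 - w ^ 2 * (mkT (C (uu 1)) * mkT (C (uu 2)) * mkT (C (uu 3)) * mkT (C (uu 4)) + ι ^ 2))
        * hz - ι ^ 2 * hw)

def phi : Prho →+* Tring :=
  Ideal.Quotient.lift Irho phiPoly fun _ h => Irho_le_ker_phiPoly h

theorem phi_mkP (p : MvPolynomial (Fin 10) Lam) : phi (mkP p) = phiPoly p :=
  Ideal.Quotient.lift_mk ..

theorem phi_mkP_X (i : Fin 10) : phi (mkP (X i)) = phiGen i := by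
  rw [phi_mkP, phiPoly_X]

theorem phi_mkP_iota : phi (mkP (C (T 1))) = mkT (C (uu 0)) := by
  rw [phi_mkP, phiPoly_C_T, zpow_one, IsUnit.unit_spec]

section Psi

local notation "z₀₀" => mkP (X 0)
local notation "z₀₁" => mkP (X 1)
local notation "z₁₀" => mkP (X 2)
local notation "z₁₁" => mkP (X 3)
local notation "c₁" => mkP (X 4)
local notation "d₁" => mkP (X 5)
local notation "c₂" => mkP (X 6)
local notation "d₂" => mkP (X 7)
local notation "c₁₂" => mkP (X 8)
local notation "d₁₂" => mkP (X 9)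

theorem mkP_eq_zero_of_mem {p : MvPolynomial (Fin 10) Lam} (hp : p ∈ Irho) : mkP p = 0 :=
  Ideal.Quotient.eq_zero_iff_mem.2 hp

theorem mkP_zeta_prod : z₀₀ * z₀₁ * z₁₀ * z₁₁ = mkP (C (T 2)) := by
  have h := mkP_eq_zero_of_mem (Ideal.subset_span (Or.inl rfl))
  simpa only [map_sub, map_mul, sub_eq_zero] using h

theorem mkP_c1_rel : z₁₀ * z₁₁ * d₁ = z₀₀ * z₀₁ * c₁ := by
  have h := mkP_eq_zero_of_mem (Ideal.subset_span (Or.inr (Or.inl rfl)))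
  simpa only [map_sub, map_mul, sub_eq_zero] using h

theorem mkP_c2_rel : z₀₁ * z₁₁ * d₂ = z₀₀ * z₁₀ * c₂ := by
  have h := mkP_eq_zero_of_mem (Ideal.subset_span (Or.inr (Or.inr (Or.inl rfl))))
  simpa only [map_sub, map_mul, sub_eq_zero] using h

theorem mkP_c12_rel : z₀₀ * c₁₂ = z₁₀ * d₁ + z₀₁ * d₂ := by
  have h := mkP_eq_zero_of_mem (Ideal.subset_span (Or.inr (Or.inr (Or.inr (Or.inl rfl)))))
  simp only [map_sub, map_mul] at h
  linear_combination h

theorem mkP_d12_rel : z₀₁ * d₁₂ = z₁₁ * d₁ + z₀₀ * c₂ := by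
  have h := mkP_eq_zero_of_mem
    (Ideal.subset_span (Or.inr (Or.inr (Or.inr (Or.inr (Or.inr (Or.inl rfl)))))))
  simp only [map_sub, map_mul] at h
  linear_combination h

theorem mkP_iota_sq : mkP (C (T 1)) ^ 2 = mkP (C (T 2)) := by
  rw [← map_pow, ← map_pow, LaurentPolynomial.T_pow]
  norm_num

theorem mkP_iota_inv_sq_mul_zeta_prod : mkP (C (T (-2))) * (z₀₀ * z₀₁ * z₁₀ * z₁₁) = 1 := by
  rw [mkP_zeta_prod, ← map_mul, ← map_mul, ← LaurentPolynomial.T_add]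
  norm_num [LaurentPolynomial.T_zero]

theorem isUnit_mkP_C_T (n : ℤ) : IsUnit (mkP (C (T n))) :=
  (LaurentPolynomial.isUnit_T n).map (mkP.comp C)

theorem isUnit_mkP_zeta : IsUnit z₀₀ ∧ IsUnit z₀₁ ∧ IsUnit z₁₀ ∧ IsUnit z₁₁ :=
  isUnit_of_isUnit_mul₄ (M := Prho) (mkP_zeta_prod ▸ isUnit_mkP_C_T 2)

def psiUnits : Fin 5 → Prhoˣ :=
  ![(isUnit_mkP_C_T 1).unit, isUnit_mkP_zeta.1.unit, isUnit_mkP_zeta.2.1.unit,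
    isUnit_mkP_zeta.2.2.1.unit, isUnit_mkP_zeta.2.2.2.unit]

def psiGen : Fin 2 → Prho :=
  ![mkP (C (T (-2))) * z₁₀ * z₁₁ * d₁, mkP (C (T (-2))) * z₀₁ * z₁₁ * d₂]

def psiPoly : MvPolynomial (Fin 2) Base →+* Prho :=
  eval₂Hom (AddMonoidAlgebra.evalUnits psiUnits) psiGen

theorem psiPoly_C_uu (i : Fin 5) : psiPoly (C (uu i)) = psiUnits i := by
  rw [psiPoly, eval₂Hom_C, uu, AddMonoidAlgebra.evalUnits_single]

theorem IT_le_ker_psiPoly : IT ≤ RingHom.ker psiPoly := by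
  rw [IT, Ideal.span_le, Set.singleton_subset_iff, SetLike.mem_coe, RingHom.mem_ker]
  simp only [map_sub, map_mul, map_pow, psiPoly_C_uu, psiUnits, Matrix.cons_val,
    IsUnit.unit_spec]
  linear_combination mkP_zeta_prod - mkP_iota_sq

def psi : Tring →+* Prho :=
  Ideal.Quotient.lift IT psiPoly fun _ h => IT_le_ker_psiPoly h

theorem psi_mkT (p : MvPolynomial (Fin 2) Base) : psi (mkT p) = psiPoly p :=
  Ideal.Quotient.lift_mk ..

theorem psi_mkT_C_uu (i : Fin 5) : psi (mkT (C (uu i))) = psiUnits i := by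
  rw [psi_mkT, psiPoly_C_uu]

theorem psi_mkT_X (j : Fin 2) : psi (mkT (X j)) = psiGen j := by
  rw [psi_mkT, psiPoly, eval₂Hom_X']

theorem psi_phi_mkP_X (i : Fin 10) : psi (phi (mkP (X i))) = mkP (X i) := by
  rw [phi_mkP_X]
  have h := mkP_iota_inv_sq_mul_zeta_prod
  set w := mkP (C (T (-2)))
  fin_cases i <;>
    simp only [phiGen, psiUnits, Fin.reduceFinMk, Matrix.cons_val, map_mul, map_add, psi_mkT_C_uu,
      psi_mkT_X, psiGen, IsUnit.unit_spec]
  · linear_combination w * z₁₀ * z₁₁ * mkP_c1_rel + c₁ * h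
  · linear_combination d₁ * h
  · linear_combination w * z₀₁ * z₁₁ * mkP_c2_rel + c₂ * h
  · linear_combination d₂ * h
  · linear_combination -w * z₀₁ * z₁₀ * z₁₁ * mkP_c12_rel + c₁₂ * h
  · linear_combination w * z₀₀ * z₁₁ * mkP_c2_rel - w * z₀₀ * z₁₀ * z₁₁ * mkP_d12_rel + d₁₂ * h

theorem psi_comp_phi : psi.comp phi = RingHom.id Prho := by
  have hC : ((psi.comp phi).comp mkP).comp C = mkP.comp C :=
    LaurentPolynomial.ringHom_ext_int <| by
      simp only [RingHom.comp_apply, phi_mkP_iota, psi_mkT_C_uu, psiUnits, Matrix.cons_val_zero,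
        IsUnit.unit_spec]
  exact Ideal.Quotient.ringHom_ext (MvPolynomial.ringHom_ext (RingHom.congr_fun hC) psi_phi_mkP_X)

theorem phi_psi_mkT_X (j : Fin 2) : phi (psi (mkT (X j))) = mkT (X j) := by
  have h := congrArg phi mkP_iota_inv_sq_mul_zeta_prod
  simp only [map_mul, map_one, phi_mkP_X, phiGen, Matrix.cons_val] at h
  fin_cases j <;>
    simp only [Fin.zero_eta, Fin.mk_one, psi_mkT_X, psiGen, Matrix.cons_val, map_mul, phi_mkP_X,
      phiGen]
  · linear_combination mkT (X 0) * h
  · linear_combination mkT (X 1) * h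

theorem phi_comp_psi : phi.comp psi = RingHom.id Tring := by
  have hC : ((phi.comp psi).comp mkT).comp C = mkT.comp C := by
    refine AddMonoidAlgebra.ringHom_ext_int_finsupp fun i => ?_
    change phi (psi (mkT (C (uu i)))) = mkT (C (uu i))
    rw [psi_mkT_C_uu]
    fin_cases i <;> simp [psiUnits, phi_mkP_iota, phi_mkP_X, phiGen]
  exact Ideal.Quotient.ringHom_ext (MvPolynomial.ringHom_ext (RingHom.congr_fun hC) phi_psi_mkT_X)

end Psi

/-- The `Λ`-algebra homomorphism `Φ : P_ρ → T` determined on generators by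
`ι ↦ ι`, `z_{ij} ↦ z_{ij}`, `c₁ ↦ z₁₀z₁₁x₁`, `d₁ ↦ z₀₀z₀₁x₁`, `c₂ ↦ z₀₁z₁₁x₂`,
`d₂ ↦ z₀₀z₁₀x₂`, `c₁₂ ↦ z₀₁z₁₀(x₁ + x₂)`, `d₁₂ ↦ z₀₀z₁₁(x₁ + x₂)` is well defined
(it kills the eight defining relations of `P_ρ`) and is an isomorphism of
`Λ`-algebras. -/
theorem rho_iso :
    ∃ Φ : Prho →+* Tring,
      Φ (mkP (C iota)) = mkT (C (uu 0)) ∧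
      Φ (mkP (X 0)) = mkT (C (uu 1)) ∧
      Φ (mkP (X 1)) = mkT (C (uu 2)) ∧
      Φ (mkP (X 2)) = mkT (C (uu 3)) ∧
      Φ (mkP (X 3)) = mkT (C (uu 4)) ∧
      Φ (mkP (X 4)) = mkT (C (uu 3) * C (uu 4) * X 0) ∧
      Φ (mkP (X 5)) = mkT (C (uu 1) * C (uu 2) * X 0) ∧
      Φ (mkP (X 6)) = mkT (C (uu 2) * C (uu 4) * X 1) ∧
      Φ (mkP (X 7)) = mkT (C (uu 1) * C (uu 3) * X 1) ∧
      Φ (mkP (X 8)) = mkT (C (uu 2) * C (uu 3) * (X 0 + X 1)) ∧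
      Φ (mkP (X 9)) = mkT (C (uu 1) * C (uu 4) * (X 0 + X 1)) ∧
      Function.Bijective Φ :=
  ⟨phi, phi_mkP_iota, phi_mkP_X 0, phi_mkP_X 1, phi_mkP_X 2, phi_mkP_X 3, phi_mkP_X 4,
    phi_mkP_X 5, phi_mkP_X 6, phi_mkP_X 7, phi_mkP_X 8, phi_mkP_X 9,
    (RingEquiv.ofRingHom phi psi phi_comp_psi psi_comp_phi).bijective⟩

end BT2Rho

end
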